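/- The Repeated Selection Model RSM(σ, Π, p) with preference probabilities p(i) = 1 for all i and selection probabilities Π(i,j) = φ^{j−1} / ∑_{k=1}^{m−i+1} φ^{k−1} (for φ ∈ (0,1]) generates total orders, and the probability it generates a ranking τ equals the Mallows probability φ^{dist(σ,τ)}/Z_{φ,m}. -/

import Mathlib

/-- Kendall-tau distance between two rankings (item ↦ position, 0-based). -/
def kendallTau {m : ℕ} (σ τ : Equiv.Perm (Fin m)) : ℕ :=
  (Finset.univ.filter
    (fun p : Fin m × Fin m => σ p.1 < σ p.2 ∧ τ p.2 < τ p.1)).card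

open Finset

/-- Group the discordant pairs `(x, y)` by the `τ`-rank `i` of `y`; the `i`-th summand is the
0-based position of `τ⁻¹ i` among the items of `σ` remaining at step `i` of the selection. -/
theorem kendallTau_eq_sum_card {m : ℕ} (σ τ : Equiv.Perm (Fin m)) :
    kendallTau σ τ = ∑ i : Fin m, #{x | i ≤ τ x ∧ σ x < σ (τ.symm i)} := by
  rw [kendallTau, card_eq_sum_card_fiberwise (f := fun p : Fin m × Fin m => τ p.2) (t := univ)
    (fun _ _ => mem_univ _)]
  refine sum_congr rfl fun i _ => ?_
  refine card_nbij' Prod.fst (fun x => (x, τ.symm i)) ?_ ?_ ?_ ?_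
  · rintro ⟨x, y⟩ hxy
    simp only [mem_coe, mem_filter, mem_univ, true_and] at hxy ⊢
    obtain ⟨⟨hσ, hτ⟩, rfl⟩ := hxy
    exact ⟨hτ.le, by simpa using hσ⟩
  · intro x hx
    simp only [mem_coe, mem_filter, mem_univ, true_and, Equiv.apply_symm_apply] at hx ⊢
    have hne : τ x ≠ i := by
      rintro rfl
      simp at hx
    exact ⟨⟨hx.2, lt_of_le_of_ne hx.1 hne.symm⟩, trivial⟩
  · rintro ⟨x, y⟩ hxy
    simp only [mem_coe, mem_filter, mem_univ, true_and] at hxy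
    simp [← hxy.2]
  · exact fun _ _ => rfl

theorem prod_fin_sub_eq_prod_range_succ {M : Type*} [CommMonoid M] (f : ℕ → M) (m : ℕ) :
    ∏ i : Fin m, f (m - i) = ∏ k ∈ range m, f (k + 1) := by
  rw [Fin.prod_univ_eq_prod_range (fun i => f (m - i)), ← prod_range_reflect]
  refine prod_congr rfl fun k hk => ?_
  rw [mem_range] at hk
  congr 1
  omega

/-- The `i`-th factor is `Π(i, j_i)` for the `i`-th selected item `τ⁻¹ i`, the remaining items
being those of `τ`-rank `≥ i` and the exponent being the 0-based position `j_i - 1`. -/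
theorem rsm_eq_mallows_general {m : ℕ} (φ : ℝ)
    (σ τ : Equiv.Perm (Fin m)) :
    (∏ i : Fin m,
        φ ^ ((Finset.univ.filter
              (fun x : Fin m => i ≤ τ x ∧ σ x < σ (τ.symm i))).card) /
          (∑ k ∈ Finset.range (m - (i : ℕ)), φ ^ k)) =
    φ ^ kendallTau σ τ /
      (∏ k ∈ Finset.range m, ∑ j ∈ Finset.range (k + 1), φ ^ j) := by
  rw [prod_div_distrib, prod_pow_eq_pow_sum, ← kendallTau_eq_sum_card,
    prod_fin_sub_eq_prod_range_succ (fun n => ∑ k ∈ range n, φ ^ k)]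

/-- Theorem 4.3: With preference probabilities `p ≡ 1`,
`RSM(σ,Π,p)` generates total orders, the ranking `τ` being produced with probability
`∏_i Π(i, j_i)` where `j_i` is the position (here 0-based: the numerator exponent)
of the `i`-th selected item `τ⁻¹(i)` among the items still remaining at step `i`
(those of τ-rank `≥ i`), listed in σ-order, and
`Π(i,j) = φ^{j-1} / ∑_{k=1}^{m-i+1} φ^{k-1}`.
This probability equals the Mallows probability `φ^{dist(σ,τ)}/Z_{φ,m}`. -/
theorem rsm_eq_mallows {m : ℕ} (φ : ℝ) (hφ0 : 0 < φ) (hφ1 : φ ≤ 1)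
    (σ τ : Equiv.Perm (Fin m)) :
    (∏ i : Fin m,
        φ ^ ((Finset.univ.filter
              (fun x : Fin m => i ≤ τ x ∧ σ x < σ (τ.symm i))).card) /
          (∑ k ∈ Finset.range (m - (i : ℕ)), φ ^ k)) =
    φ ^ kendallTau σ τ /
      (∏ k ∈ Finset.range m, ∑ j ∈ Finset.range (k + 1), φ ^ j) :=
  rsm_eq_mallows_general φ σ τ
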